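/- Let φ be the Fibonacci morphism, f_k = φ^{k-1}(0), and p_n the n-th bispecial factor (f_n with last two letters removed). For all n ≥ 0: 1·φ(01)·φ²(1)·φ³(1)···φ^{2n+2}(1)·φ^{2n+3}(01) = 1·f_{2n+4}·f_{2n+5} = 1·p_{2n+6}·1·0·0, i.e., the word 1·φ(01)·φ²(1)···φ^{2n+2}(1)·φ^{2n+3}(01) equals d_{2n+6}·0 where d_m = 1·p_m·1 for even m. -/

import Mathlib

/-!
Write `f k` for `fibw k`. Since `φ^{m+1}(1) = φ^m(0)`, the factors `φ^{j+2}(1)` are the Fibonacci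
words `f (j+2)`, and `φ^{m+1}(01) = f (m+2) f (m+1)`. Hence the product telescopes through
`f (k+2) f (k+1) = f (k+3)` to `1 · f (2n+4) · f (2n+5)`. For the second identity, `f (m+2) f (m+1)`
and `f (m+1) f (m+2)` agree except that their last two letters are swapped. An induction on `m`
shows this, and that the common prefix is `p (m+3)` and that the last two letters of `f (m+3)`
are determined by the parity of `m`. With `m = 2n+3` this gives `f (2n+4) f (2n+5) = p (2n+6) · 1 0`.
-/

/-- The Fibonacci morphism on letters: φ(0)=01, φ(1)=0 (0 = `false`, 1 = `true`). -/
def phi : Bool → List Bool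
  | false => [false, true]
  | true  => [false]

/-- The Fibonacci morphism extended to words. -/
def phiW (w : List Bool) : List Bool := w.flatMap phi

/-- The finite Fibonacci words: `fibw n = φ^{n-1}(0)` for `n ≥ 1`. -/
def fibw (n : ℕ) : List Bool := phiW^[n - 1] [false]

/-- The bispecial factors of the Fibonacci word. -/
def pbis (n : ℕ) : List Bool := (fibw n).dropLast.dropLast

/-- The minimal forbidden words of the Fibonacci word:
`d n = 1 p_n 1` for even `n`, `d n = 0 p_n 0` for odd `n`. -/
def dF (n : ℕ) : List Bool :=
  if n % 2 = 0 then [true] ++ pbis n ++ [true] else [false] ++ pbis n ++ [false]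

lemma phiW_append (a b : List Bool) : phiW (a ++ b) = phiW a ++ phiW b :=
  List.flatMap_append

lemma phiW_iterate_append (k : ℕ) (a b : List Bool) :
    phiW^[k] (a ++ b) = phiW^[k] a ++ phiW^[k] b := by
  induction k generalizing a b with
  | zero => rfl
  | succ k ih => rw [Function.iterate_succ_apply, phiW_append, ih]; rfl

lemma phiW_iterate_true (m : ℕ) : phiW^[m + 1] [true] = fibw (m + 1) := rfl

lemma phiW_iterate_false_true (m : ℕ) :
    phiW^[m + 1] [false, true] = fibw (m + 2) ++ fibw (m + 1) :=
  phiW_iterate_append (m + 1) [false] [true]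

lemma fibw_add_three (m : ℕ) : fibw (m + 3) = fibw (m + 2) ++ fibw (m + 1) :=
  phiW_iterate_false_true m

lemma fibw_three_append_flatten (k : ℕ) :
    fibw 3 ++ ((List.range k).map (fun j => fibw (j + 2))).flatten = fibw (k + 3) := by
  induction k with
  | zero => simp
  | succ k ih =>
    rw [List.range_succ, List.map_append, List.flatten_append, ← List.append_assoc, ih,
      fibw_add_three (k + 1)]
    simp

lemma pbis_eq_of_fibw_eq {k : ℕ} {P : List Bool} {x y : Bool} (h : fibw k = P ++ [x, y]) :
    pbis k = P := by
  rw [pbis, h, show P ++ [x, y] = P ++ [x] ++ [y] by simp, List.dropLast_concat,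
    List.dropLast_concat]

lemma fibw_append_swap (m : ℕ) :
    fibw (m + 2) ++ fibw (m + 1) = pbis (m + 3) ++ [decide (Even m), !decide (Even m)] ∧
    fibw (m + 1) ++ fibw (m + 2) = pbis (m + 3) ++ [!decide (Even m), decide (Even m)] := by
  induction m with
  | zero => exact ⟨rfl, rfl⟩
  | succ m ih =>
    have hparity : decide (Even (m + 1)) = !decide (Even m) := by
      simp only [Nat.even_add_one, decide_not]
    have hfwd : fibw (m + 3) ++ fibw (m + 2) =
        (fibw (m + 2) ++ pbis (m + 3)) ++ [!decide (Even m), decide (Even m)] := by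
      rw [fibw_add_three, List.append_assoc, ih.2, List.append_assoc]
    have hbwd : fibw (m + 2) ++ fibw (m + 3) =
        (fibw (m + 2) ++ pbis (m + 3)) ++ [decide (Even m), !decide (Even m)] := by
      rw [fibw_add_three, ih.1, List.append_assoc]
    have hpbis : pbis (m + 4) = fibw (m + 2) ++ pbis (m + 3) :=
      pbis_eq_of_fibw_eq ((fibw_add_three (m + 1)).trans hfwd)
    rw [hparity, Bool.not_not, hpbis]
    exact ⟨hfwd, hbwd⟩

theorem fib_expansion_identity_even (n : ℕ) :
    [true] ++ phiW [false, true] ++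
        ((List.range (2 * n + 1)).map (fun j => phiW^[j + 2] [true])).flatten ++
        phiW^[2 * n + 3] [false, true]
      = [true] ++ fibw (2 * n + 4) ++ fibw (2 * n + 5) ∧
    [true] ++ fibw (2 * n + 4) ++ fibw (2 * n + 5) = dF (2 * n + 6) ++ [false] := by
  constructor
  · have hphi : phiW [false, true] = fibw 3 := rfl
    have hfactors : (fun j => phiW^[j + 2] [true]) = fun j => fibw (j + 2) :=
      funext fun j => phiW_iterate_true (j + 1)
    rw [hphi, hfactors, List.append_assoc [true], fibw_three_append_flatten,
      phiW_iterate_false_true (2 * n + 2), fibw_add_three (2 * n + 2)]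
  · have hodd : decide (Even (2 * n + 3)) = false := by
      simp [Nat.even_add_one]
    have hswap := (fibw_append_swap (2 * n + 3)).2
    rw [hodd] at hswap
    rw [dF, if_pos (by omega), List.append_assoc [true], hswap]
    simp
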